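/- Let p, q, θ ∈ ℝ, s := cos(θ)·1 + sin(θ)·kℓ, and let B be the 3×3 octonionic Hermitian matrix with rows (p, q·i, q·(k·s)), (−q·i, p, q·j), (−q·(k·s), −q·j, p). Fix (ε, S) equal to (+1, −kℓ) or (−1, 1), and set u := (i, 0, j)·S, v := (j, 2·k·s, i)·S, w := (j, −k·s, i)·S (componentwise right multiplication), λᵤ := p + ε·q·conj(s), λᵥ := p + ε·q·conj(s), λ_w := p − 2·ε·q·conj(s). Then B admits both decompositions: for all indices α, β, Bₐᵦ = λᵤ·(uₐ·conj(uᵦ))/2 + λᵥ·(vₐ·conj(vᵦ))/6 + λ_w·(wₐ·conj(wᵦ))/3, and also Bₐᵦ = ((uₐ·λᵤ)·conj(uᵦ))/2 + ((vₐ·λᵥ)·conj(vᵦ))/6 + ((wₐ·λ_w)·conj(wᵦ))/3. (Here 2, 6, 3 are the squared norms of u, v, w.) -/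

import Mathlib

/-!
Both right-hand sides are ℝ-linear in the eigenvalues, which are real combinations of `1` and
`conj s`. Splitting them accordingly, the first decomposition reduces to the two matrix identities
`uu†/2 + vv†/6 + ww†/3 = 1` and `conj s · (uu†/2 + vv†/6 − 2ww†/3) = ε X`, and the second to
`((u conj s) u†)/2 + ((v conj s) v†)/6 − 2((w conj s) w†)/3 = ε X`, where `B = p·1 + q·X`.
These are finitely many octonion identities, checked in the eight real coordinates, using only
`cos² θ + sin² θ = 1`.
-/

noncomputable section

open Quaternion

/-- The octonions, realized as the Cayley–Dickson double of the real quaternions: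
pairs of quaternions. -/
abbrev 𝕆 : Type := ℍ[ℝ] × ℍ[ℝ]

namespace Octonion

/-- Cayley–Dickson multiplication: `(a, b)·(c, d) = (a·c − conj(d)·b, d·a + b·conj(c))`. -/
def omul (x y : 𝕆) : 𝕆 :=
  (x.1 * y.1 - star y.2 * x.2, y.2 * x.1 + x.2 * star y.1)

/-- Octonionic conjugation: `conj (a, b) = (conj a, −b)`. -/
def oconj (x : 𝕆) : 𝕆 := (star x.1, -x.2)

/-- The embedding of the reals, `r ↦ (r, 0)`. -/
def oR (r : ℝ) : 𝕆 := ((r : ℍ[ℝ]), 0)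

/-- The unit octonion `1 = (1, 0)`. -/
def o1 : 𝕆 := oR 1

/-- The associator `[a,b,c] = (a·b)·c − a·(b·c)`. -/
def oassoc (a b c : 𝕆) : 𝕆 := omul (omul a b) c - omul a (omul b c)

/-- The inner product: the real number with `(a·conj b + b·conj a)/2 = (a ⋅ b)·1`. -/
def odot (x y : 𝕆) : ℝ := (omul x (oconj y) + omul y (oconj x)).1.re / 2

/-- The squared norm `|x|²`, the real number with `x·conj x = |x|²·1`. -/
def onormSq (x : 𝕆) : ℝ := odot x x

/-- The real part of an octonion, as a real number. -/
def oreR (x : 𝕆) : ℝ := x.1.re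

/-- The imaginary part `Im(x) = (x − conj x)/2`. -/
def oIm (x : 𝕆) : 𝕆 := (2:ℝ)⁻¹ • (x - oconj x)

/-- The imaginary units. -/
def oi : 𝕆 := (⟨0,1,0,0⟩, 0)
def oj : 𝕆 := (⟨0,0,1,0⟩, 0)
def ok : 𝕆 := (⟨0,0,0,1⟩, 0)
def ol : 𝕆 := (0, 1)
def oil : 𝕆 := (0, ⟨0,1,0,0⟩)
def ojl : 𝕆 := (0, ⟨0,0,1,0⟩)
def okl : 𝕆 := (0, ⟨0,0,0,1⟩)

end Octonion


open Octonion

/-- `s = cos θ + sin θ kℓ`. -/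
def sB (θ : ℝ) : 𝕆 := Real.cos θ • o1 + Real.sin θ • okl

/-- The matrix `B` of Example 1, with rows `(p, qi, q(ks))`, `(−qi, p, qj)`,
`(−q(ks), −qj, p)`. -/
def Bmat (p q θ : ℝ) : Fin 3 → Fin 3 → 𝕆 :=
  ![![oR p, q • oi, q • omul ok (sB θ)],
    ![-(q • oi), oR p, q • oj],
    ![-(q • omul ok (sB θ)), -(q • oj), oR p]]

namespace Octonion

theorem omul_add_left (x y z : 𝕆) : omul (x + y) z = omul x z + omul y z := by
  ext1 <;> simp only [omul, Prod.fst_add, Prod.snd_add, add_mul, mul_add] <;> abel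

theorem omul_add_right (x y z : 𝕆) : omul x (y + z) = omul x y + omul x z := by
  ext1 <;> simp only [omul, Prod.fst_add, Prod.snd_add, star_add, add_mul, mul_add] <;> abel

theorem omul_sub_left (x y z : 𝕆) : omul (x - y) z = omul x z - omul y z := by
  ext1 <;> simp only [omul, Prod.fst_sub, Prod.snd_sub, sub_mul, mul_sub] <;> abel

theorem omul_sub_right (x y z : 𝕆) : omul x (y - z) = omul x y - omul x z := by
  ext1 <;> simp only [omul, Prod.fst_sub, Prod.snd_sub, star_sub, sub_mul, mul_sub] <;> abel

theorem omul_smul_left (r : ℝ) (x y : 𝕆) : omul (r • x) y = r • omul x y := by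
  ext1 <;> simp only [omul, Prod.smul_fst, Prod.smul_snd, smul_sub, smul_add, smul_mul_assoc,
    mul_smul_comm]

theorem omul_smul_right (r : ℝ) (x y : 𝕆) : omul x (r • y) = r • omul x y := by
  ext1 <;> simp only [omul, Prod.smul_fst, Prod.smul_snd, Quaternion.star_smul, smul_sub, smul_add,
    smul_mul_assoc, mul_smul_comm]

theorem omul_oR_left (r : ℝ) (x : 𝕆) : omul (oR r) x = r • x := by
  ext1 <;> simp [omul, oR, Quaternion.coe_mul_eq_smul, Quaternion.mul_coe_eq_smul]

theorem omul_oR_right (x : 𝕆) (r : ℝ) : omul x (oR r) = r • x := by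
  ext1 <;> simp [omul, oR, Quaternion.mul_coe_eq_smul]

def ofCoords (a₀ a₁ a₂ a₃ a₄ a₅ a₆ a₇ : ℝ) : 𝕆 := (⟨a₀, a₁, a₂, a₃⟩, ⟨a₄, a₅, a₆, a₇⟩)

@[simp] theorem zero_eq_ofCoords : (0 : 𝕆) = ofCoords 0 0 0 0 0 0 0 0 := rfl
@[simp] theorem oR_eq_ofCoords (r : ℝ) : oR r = ofCoords r 0 0 0 0 0 0 0 := rfl
@[simp] theorem o1_eq_ofCoords : o1 = ofCoords 1 0 0 0 0 0 0 0 := rfl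
@[simp] theorem oi_eq_ofCoords : oi = ofCoords 0 1 0 0 0 0 0 0 := rfl
@[simp] theorem oj_eq_ofCoords : oj = ofCoords 0 0 1 0 0 0 0 0 := rfl
@[simp] theorem ok_eq_ofCoords : ok = ofCoords 0 0 0 1 0 0 0 0 := rfl
@[simp] theorem okl_eq_ofCoords : okl = ofCoords 0 0 0 0 0 0 0 1 := rfl

section Coordinates

variable {a₀ a₁ a₂ a₃ a₄ a₅ a₆ a₇ b₀ b₁ b₂ b₃ b₄ b₅ b₆ b₇ : ℝ}

@[simp] theorem ofCoords_inj :
    ofCoords a₀ a₁ a₂ a₃ a₄ a₅ a₆ a₇ = ofCoords b₀ b₁ b₂ b₃ b₄ b₅ b₆ b₇ ↔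
      a₀ = b₀ ∧ a₁ = b₁ ∧ a₂ = b₂ ∧ a₃ = b₃ ∧ a₄ = b₄ ∧ a₅ = b₅ ∧ a₆ = b₆ ∧ a₇ = b₇ := by
  constructor
  · intro h
    cases h
    simp
  · rintro ⟨rfl, rfl, rfl, rfl, rfl, rfl, rfl, rfl⟩
    rfl

@[simp] theorem ofCoords_add :
    ofCoords a₀ a₁ a₂ a₃ a₄ a₅ a₆ a₇ + ofCoords b₀ b₁ b₂ b₃ b₄ b₅ b₆ b₇ =
    ofCoords (a₀ + b₀) (a₁ + b₁) (a₂ + b₂) (a₃ + b₃) (a₄ + b₄) (a₅ + b₅) (a₆ + b₆) (a₇ + b₇) :=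
  rfl

@[simp] theorem ofCoords_sub :
    ofCoords a₀ a₁ a₂ a₃ a₄ a₅ a₆ a₇ - ofCoords b₀ b₁ b₂ b₃ b₄ b₅ b₆ b₇ =
    ofCoords (a₀ - b₀) (a₁ - b₁) (a₂ - b₂) (a₃ - b₃) (a₄ - b₄) (a₅ - b₅) (a₆ - b₆) (a₇ - b₇) :=
  rfl

@[simp] theorem neg_ofCoords : -ofCoords a₀ a₁ a₂ a₃ a₄ a₅ a₆ a₇ =
    ofCoords (-a₀) (-a₁) (-a₂) (-a₃) (-a₄) (-a₅) (-a₆) (-a₇) :=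
  rfl

@[simp] theorem smul_ofCoords (r : ℝ) : r • ofCoords a₀ a₁ a₂ a₃ a₄ a₅ a₆ a₇ =
    ofCoords (r * a₀) (r * a₁) (r * a₂) (r * a₃) (r * a₄) (r * a₅) (r * a₆) (r * a₇) :=
  rfl

@[simp] theorem oconj_ofCoords : oconj (ofCoords a₀ a₁ a₂ a₃ a₄ a₅ a₆ a₇) =
    ofCoords a₀ (-a₁) (-a₂) (-a₃) (-a₄) (-a₅) (-a₆) (-a₇) := by
  ext <;> simp only [oconj, Quaternion.re_star, Quaternion.imI_star, Quaternion.imJ_star,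
    Quaternion.imK_star, Quaternion.re_neg, Quaternion.imI_neg, Quaternion.imJ_neg,
    Quaternion.imK_neg] <;> rfl

@[simp] theorem omul_ofCoords :
    omul (ofCoords a₀ a₁ a₂ a₃ a₄ a₅ a₆ a₇) (ofCoords b₀ b₁ b₂ b₃ b₄ b₅ b₆ b₇) = ofCoords
      (a₀ * b₀ - a₁ * b₁ - a₂ * b₂ - a₃ * b₃ - a₄ * b₄ - a₅ * b₅ - a₆ * b₆ - a₇ * b₇)
      (a₀ * b₁ + a₁ * b₀ + a₂ * b₃ - a₃ * b₂ + a₄ * b₅ - a₅ * b₄ - a₆ * b₇ + a₇ * b₆)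
      (a₀ * b₂ - a₁ * b₃ + a₂ * b₀ + a₃ * b₁ + a₄ * b₆ + a₅ * b₇ - a₆ * b₄ - a₇ * b₅)
      (a₀ * b₃ + a₁ * b₂ - a₂ * b₁ + a₃ * b₀ + a₄ * b₇ - a₅ * b₆ + a₆ * b₅ - a₇ * b₄)
      (a₀ * b₄ - a₁ * b₅ - a₂ * b₆ - a₃ * b₇ + a₄ * b₀ + a₅ * b₁ + a₆ * b₂ + a₇ * b₃)
      (a₀ * b₅ + a₁ * b₄ - a₂ * b₇ + a₃ * b₆ - a₄ * b₁ + a₅ * b₀ - a₆ * b₃ + a₇ * b₂)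
      (a₀ * b₆ + a₁ * b₇ + a₂ * b₄ - a₃ * b₅ - a₄ * b₂ + a₅ * b₃ + a₆ * b₀ - a₇ * b₁)
      (a₀ * b₇ - a₁ * b₆ + a₂ * b₅ + a₃ * b₄ - a₄ * b₃ - a₅ * b₂ + a₆ * b₁ + a₇ * b₀) := by
  ext <;> simp only [omul, Quaternion.re_star, Quaternion.imI_star, Quaternion.imJ_star,
    Quaternion.imK_star, Quaternion.re_mul, Quaternion.imI_mul, Quaternion.imJ_mul,
    Quaternion.imK_mul, Quaternion.re_add, Quaternion.imI_add, Quaternion.imJ_add,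
    Quaternion.imK_add, Quaternion.re_sub, Quaternion.imI_sub, Quaternion.imJ_sub,
    Quaternion.imK_sub] <;> simp only [ofCoords] <;> ring

end Coordinates

end Octonion

open Octonion

def uVec (S : 𝕆) : Fin 3 → 𝕆 := ![omul oi S, omul 0 S, omul oj S]

def vVec (s S : 𝕆) : Fin 3 → 𝕆 := ![omul oj S, omul ((2:ℝ) • omul ok s) S, omul oi S]

def wVec (s S : 𝕆) : Fin 3 → 𝕆 := ![omul oj S, omul (-omul ok s) S, omul oi S]

def imagB (s : 𝕆) : Fin 3 → Fin 3 → 𝕆 :=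
  ![![0, oi, omul ok s], ![-oi, 0, oj], ![-omul ok s, -oj, 0]]

theorem Bmat_eq_add_imagB (p q θ : ℝ) (α β : Fin 3) :
    Bmat p q θ α β = p • (if α = β then o1 else 0) + q • imagB (sB θ) α β := by
  fin_cases α <;> fin_cases β <;> simp [Bmat, imagB]

theorem frame_outer_sum_eq_one {c t : ℝ} {s S : 𝕆} (hs : s = c • o1 + t • okl)
    (hct : c ^ 2 + t ^ 2 = 1) (hS : S = -okl ∨ S = o1) (α β : Fin 3) :
    (2:ℝ)⁻¹ • omul (uVec S α) (oconj (uVec S β))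
      + (6:ℝ)⁻¹ • omul (vVec s S α) (oconj (vVec s S β))
      + (3:ℝ)⁻¹ • omul (wVec s S α) (oconj (wVec s S β)) = if α = β then o1 else 0 := by
  subst hs
  rcases hS with rfl | rfl <;> fin_cases α <;> fin_cases β <;> simp [uVec, vVec, wVec] <;> grind

theorem oconj_mul_frame_outer_diff {ε c t : ℝ} {s S : 𝕆} (hs : s = c • o1 + t • okl)
    (hct : c ^ 2 + t ^ 2 = 1) (hεS : (ε = 1 ∧ S = -okl) ∨ (ε = -1 ∧ S = o1)) (α β : Fin 3) :
    omul (oconj s) ((2:ℝ)⁻¹ • omul (uVec S α) (oconj (uVec S β))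
      + (6:ℝ)⁻¹ • omul (vVec s S α) (oconj (vVec s S β))
      - (2 / 3 : ℝ) • omul (wVec s S α) (oconj (wVec s S β))) = ε • imagB s α β := by
  subst hs
  rcases hεS with ⟨rfl, rfl⟩ | ⟨rfl, rfl⟩ <;> fin_cases α <;> fin_cases β <;>
    simp [uVec, vVec, wVec, imagB] <;> grind

theorem frame_mul_oconj_outer_diff {ε c t : ℝ} {s S : 𝕆} (hs : s = c • o1 + t • okl)
    (hct : c ^ 2 + t ^ 2 = 1) (hεS : (ε = 1 ∧ S = -okl) ∨ (ε = -1 ∧ S = o1)) (α β : Fin 3) :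
    (2:ℝ)⁻¹ • omul (omul (uVec S α) (oconj s)) (oconj (uVec S β))
      + (6:ℝ)⁻¹ • omul (omul (vVec s S α) (oconj s)) (oconj (vVec s S β))
      - (2 / 3 : ℝ) • omul (omul (wVec s S α) (oconj s)) (oconj (wVec s S β))
      = ε • imagB s α β := by
  subst hs
  rcases hεS with ⟨rfl, rfl⟩ | ⟨rfl, rfl⟩ <;> fin_cases α <;> fin_cases β <;>
    simp [uVec, vVec, wVec, imagB] <;> grind

/-- The two decompositions of the matrix `B` of Example 1:
`Bₐᵦ = λᵤ(uₐ conj uᵦ)/2 + λᵥ(vₐ conj vᵦ)/6 + λ_w(wₐ conj wᵦ)/3`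
and `Bₐᵦ = ((uₐ λᵤ) conj uᵦ)/2 + ((vₐ λᵥ) conj vᵦ)/6 + ((wₐ λ_w) conj wᵦ)/3`. -/
theorem example1_decompositions (p q θ ε : ℝ) (S : 𝕆)
    (hεS : (ε = 1 ∧ S = -okl) ∨ (ε = -1 ∧ S = o1)) :
    ∀ α β : Fin 3,
      (Bmat p q θ α β
        = (2:ℝ)⁻¹ • omul (oR p + (ε * q) • oconj (sB θ))
            (omul (![omul oi S, omul 0 S, omul oj S] α)
              (oconj (![omul oi S, omul 0 S, omul oj S] β)))
          + (6:ℝ)⁻¹ • omul (oR p + (ε * q) • oconj (sB θ))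
            (omul (![omul oj S, omul ((2:ℝ) • omul ok (sB θ)) S, omul oi S] α)
              (oconj (![omul oj S, omul ((2:ℝ) • omul ok (sB θ)) S, omul oi S] β)))
          + (3:ℝ)⁻¹ • omul (oR p - (2 * ε * q) • oconj (sB θ))
            (omul (![omul oj S, omul (-omul ok (sB θ)) S, omul oi S] α)
              (oconj (![omul oj S, omul (-omul ok (sB θ)) S, omul oi S] β))))
      ∧ (Bmat p q θ α β
        = (2:ℝ)⁻¹ • omul (omul (![omul oi S, omul 0 S, omul oj S] α)
              (oR p + (ε * q) • oconj (sB θ)))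
            (oconj (![omul oi S, omul 0 S, omul oj S] β))
          + (6:ℝ)⁻¹ • omul (omul (![omul oj S, omul ((2:ℝ) • omul ok (sB θ)) S, omul oi S] α)
              (oR p + (ε * q) • oconj (sB θ)))
            (oconj (![omul oj S, omul ((2:ℝ) • omul ok (sB θ)) S, omul oi S] β))
          + (3:ℝ)⁻¹ • omul (omul (![omul oj S, omul (-omul ok (sB θ)) S, omul oi S] α)
              (oR p - (2 * ε * q) • oconj (sB θ)))
            (oconj (![omul oj S, omul (-omul ok (sB θ)) S, omul oi S] β))) := by
  intro α β
  have hε : ε * ε = 1 := by rcases hεS with ⟨rfl, -⟩ | ⟨rfl, -⟩ <;> norm_num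
  have hs : sB θ = Real.cos θ • o1 + Real.sin θ • okl := rfl
  have hct := Real.cos_sq_add_sin_sq θ
  have hI := frame_outer_sum_eq_one hs hct (hεS.imp And.right And.right) α β
  have hL := oconj_mul_frame_outer_diff hs hct hεS α β
  have hM := frame_mul_oconj_outer_diff hs hct hεS α β
  unfold uVec vVec wVec at hI hL hM
  rw [Bmat_eq_add_imagB]
  -- normalise the hypotheses too: the rewriting also reaches inside the vector entries
  simp only [omul_add_left, omul_sub_left, omul_smul_left, omul_oR_left, omul_add_right,
    omul_sub_right, omul_smul_right, omul_oR_right] at hI hL hM ⊢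
  constructor
  · linear_combination (norm := module) -p • hI - (ε * q) • hL - hε • (q • imagB (sB θ) α β)
  · linear_combination (norm := module) -p • hI - (ε * q) • hM - hε • (q • imagB (sB θ) α β)
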